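/- arXiv:2504.02266 — 5 statements merged into one kernel-verified Lean document; each statement's English description precedes it below -/
import Mathlib

section
/- (Lemma 3.2) For all 1 ≤ i < j ≤ r, one has the equality of linear endomorphisms of E: 2·Ω_{ij} = −κ_{ij} + H_i + H_j. -/
/-!
Index the generators by pairs `(a, i)`. Each summand `x_{a,i} ∂_{b,i} x_{b,j} ∂_{a,j}` of `Ω_{ij}`
and the two matching summands of `κ_{ij}` are brought to the normal order `x x ∂ ∂` with the
anticommutation relations. All three share the same quartic normal-ordered part, with coefficients
`2, -1, -1` after scaling the first by `2`, so only the quadratic contraction terms survive; since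
`i ≠ j` these appear only for `a = b` and sum to `H_i + H_j`.
-/

/-- The canonical anticommutation relations for creation operators `x` and annihilation
operators `d` in a ring. -/
structure IsCAR {A ι : Type*} [Ring A] [DecidableEq ι] (x d : ι → A) : Prop where
  x_anticomm : ∀ α β, x α * x β + x β * x α = 0
  d_anticomm : ∀ α β, d α * d β + d β * d α = 0
  x_d_anticomm : ∀ α β, x α * d β + d β * x α = if α = β then 1 else 0

namespace IsCAR

variable {A ι : Type*} [Ring A] [DecidableEq ι] {x d : ι → A}

theorem x_mul_x (h : IsCAR x d) (α β : ι) : x α * x β = -(x β * x α) :=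
  eq_neg_of_add_eq_zero_left (h.x_anticomm α β)

theorem d_mul_d (h : IsCAR x d) (α β : ι) : d α * d β = -(d β * d α) :=
  eq_neg_of_add_eq_zero_left (h.d_anticomm α β)

theorem d_mul_x (h : IsCAR x d) (α β : ι) :
    d β * x α = (if α = β then 1 else 0) - x α * d β :=
  eq_sub_of_add_eq' (h.x_d_anticomm α β)

theorem normal_order (h : IsCAR x d) (α β γ δ : ι) :
    x α * d β * x γ * d δ = (if γ = β then x α * d δ else 0) - x α * x γ * d β * d δ := by
  calc x α * d β * x γ * d δ = x α * (d β * x γ) * d δ := by noncomm_ring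
    _ = _ := by rw [h.d_mul_x]; split_ifs <;> noncomm_ring

theorem two_nsmul_mul_mul_mul (h : IsCAR x d) {α β γ δ : ι} (hβγ : β ≠ γ) :
    2 • (x α * d β * x γ * d δ) =
      -(x α * d δ * x γ * d β + x γ * d β * x α * d δ)
        + (if γ = δ then x α * d β else 0) + (if α = β then x γ * d δ else 0) := by
  rw [h.normal_order α β γ δ, h.normal_order α δ γ β, h.normal_order γ β α δ, if_neg hβγ.symm,
    h.x_mul_x γ α, mul_assoc (x α * x γ) (d δ), h.d_mul_d δ β]
  noncomm_ring

end IsCAR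

theorem lemma3_2_general (t r : ℕ)
    (E : Type*) [AddCommGroup E] [Module ℂ E]
    (x d : Fin t → Fin r → Module.End ℂ E)
    (hxx : ∀ a i b j, x a i * x b j + x b j * x a i = 0)
    (hdd : ∀ a i b j, d a i * d b j + d b j * d a i = 0)
    (hxd : ∀ a i b j, x a i * d b j + d b j * x a i =
      if a = b ∧ i = j then 1 else 0)
    (Ω : Fin r → Fin r → Module.End ℂ E)
    (hΩ : ∀ i j, Ω i j = ∑ a : Fin t, ∑ b : Fin t, x a i * d b i * x b j * d a j)
    (κ : Fin r → Fin r → Module.End ℂ E)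
    (hκ : ∀ i j, κ i j = ∑ a : Fin t, ∑ b : Fin t,
      (x a i * d a j * x b j * d b i + x b j * d b i * x a i * d a j))
    (H : Fin r → Module.End ℂ E)
    (hH : ∀ i, H i = ∑ a : Fin t, x a i * d a i) :
    ∀ i j : Fin r, i < j → 2 • Ω i j = -κ i j + H i + H j := by
  intro i j hij
  have hCAR : IsCAR (fun p : Fin t × Fin r ↦ x p.1 p.2) (fun p ↦ d p.1 p.2) :=
    ⟨fun _ _ ↦ hxx .., fun _ _ ↦ hdd .., fun _ _ ↦ by simpa [Prod.ext_iff] using hxd ..⟩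
  have hterm (a b : Fin t) := hCAR.two_nsmul_mul_mul_mul (α := (a, i)) (β := (b, i))
    (γ := (b, j)) (δ := (a, j)) (by simp [hij.ne])
  simp only [Prod.mk.injEq, and_true] at hterm
  rw [hΩ, hκ, hH, hH]
  simp only [Finset.smul_sum, hterm, Finset.sum_add_distrib, Finset.sum_neg_distrib,
    Finset.sum_ite_eq', Finset.sum_ite_eq, Finset.mem_univ, if_true]

/-- **Lemma 3.2.**  Let `E` be the exterior algebra (a complex vector space) carrying
operators `x a i` (exterior multiplication by `v_{a,i}`) and `d a i` (contraction with
`v*_{a,i}`) satisfying the canonical anticommutation relations.  With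
`Ω i j = Σ_{a,b} x_{a,i} ∂_{b,i} x_{b,j} ∂_{a,j}`,
`κ i j = Σ_{a,b} (x_{a,i} ∂_{a,j} x_{b,j} ∂_{b,i} + x_{b,j} ∂_{b,i} x_{a,i} ∂_{a,j})`,
`H i = Σ_a x_{a,i} ∂_{a,i}`, one has `2 Ω_{ij} = -κ_{ij} + H_i + H_j` for all `i < j`. -/
theorem lemma3_2 (t r : ℕ) (ht : 0 < t) (hr : 0 < r)
    (E : Type*) [AddCommGroup E] [Module ℂ E]
    (x d : Fin t → Fin r → Module.End ℂ E)
    (hxx : ∀ a i b j, x a i * x b j + x b j * x a i = 0)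
    (hdd : ∀ a i b j, d a i * d b j + d b j * d a i = 0)
    (hxd : ∀ a i b j, x a i * d b j + d b j * x a i =
      if a = b ∧ i = j then 1 else 0)
    (Ω : Fin r → Fin r → Module.End ℂ E)
    (hΩ : ∀ i j, Ω i j = ∑ a : Fin t, ∑ b : Fin t, x a i * d b i * x b j * d a j)
    (κ : Fin r → Fin r → Module.End ℂ E)
    (hκ : ∀ i j, κ i j = ∑ a : Fin t, ∑ b : Fin t,
      (x a i * d a j * x b j * d b i + x b j * d b i * x a i * d a j))
    (H : Fin r → Module.End ℂ E)
    (hH : ∀ i, H i = ∑ a : Fin t, x a i * d a i) :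
    ∀ i j : Fin r, i < j → 2 • Ω i j = -κ i j + H i + H j :=
  lemma3_2_general t r E x d hxx hdd hxd Ω hΩ κ hκ H hH
end

section
/- (Theorem 3.3, first part) Let f : U → E be a differentiable function such that H_i(f(z)) = β_i·f(z) for all z ∈ U and all 1 ≤ i ≤ r. Then f satisfies the Knizhnik–Zamolodchikov system ∂f/∂z_k = ℏ·Σ_{j ≠ k} (z_k − z_j)^{−1}·Ω_{kj}(f) for all k, if and only if the function g(z) := (Π_{1 ≤ i < j ≤ r} (z_i − z_j)^{−(β_i+β_j)ℏ/2})·f(z) satisfies ∂g/∂z_k = −(ℏ/2)·Σ_{j ≠ k} (z_k − z_j)^{−1}·κ_{kj}(g) for all k. -/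
/-!
For `k ≠ j` the canonical anticommutation relations give `κ_{kj} + 2 Ω_{kj} = H_k + H_j`, so on
the `β`-weight space `κ_{kj}` acts as `β_k + β_j - 2 Ω_{kj}`. The factor
`Φ(z) = ∏_{i<j} (z_i - z_j)^{c_{ij}}`, `c_{ij} = -(β_i + β_j) ℏ / 2`, has logarithmic derivative
`∂_k Φ / Φ = ∑_{j ≠ k} c_{kj} / (z_k - z_j)`. Hence for `g = Φ f` both sides of the system for `g`
are `Φ` times the corresponding sides of the KZ system for `f`, plus the same multiple of `Φ f`;
since `Φ ≠ 0` on `U`, the two systems are equivalent.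
-/

open Finset

theorem anticomm_quartic {R : Type*} [Ring R] {A B P Q δ : R}
    (hA : Commute δ A) (hB : Commute δ B)
    (hBP : B * P + P * B = δ) (hAQ : A * Q + Q * A = δ) (hBQ : B * Q + Q * B = 0)
    (hPQ : P * Q + Q * P = 0) (hAB : A * B + B * A = 0) :
    A * P * B * Q + B * Q * A * P + 2 * (A * Q * B * P) = δ * (A * Q + B * P) := by
  linear_combination (norm := noncomm_ring) A * hBP * Q - A * B * hPQ + B * hAQ * P
    - hAB * Q * P + 2 * A * hBQ * P - hA.eq * Q - hB.eq * P

theorem car_kappa_add_two_mul_omega {R α ι : Type*} [Ring R] [Fintype α] [DecidableEq α]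
    [DecidableEq ι] {x d : α → ι → R}
    (hxx : ∀ a i b j, x a i * x b j + x b j * x a i = 0)
    (hdd : ∀ a i b j, d a i * d b j + d b j * d a i = 0)
    (hxd : ∀ a i b j, x a i * d b j + d b j * x a i = if a = b ∧ i = j then 1 else 0)
    {i j : ι} (hij : i ≠ j) :
    ∑ a, ∑ b, (x a i * d a j * x b j * d b i + x b j * d b i * x a i * d a j)
      + 2 * ∑ a, ∑ b, x a i * d b i * x b j * d a j
      = ∑ a, x a i * d a i + ∑ a, x a j * d a j := by
  have hterm : ∀ a b, x a i * d a j * x b j * d b i + x b j * d b i * x a i * d a j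
      + 2 * (x a i * d b i * x b j * d a j)
      = if a = b then x a i * d b i + x b j * d a j else 0 := by
    intro a b
    have hδ : ∀ y : R, Commute (if a = b then 1 else 0) y := fun y => by
      split_ifs <;> simp
    rw [anticomm_quartic (hδ _) (hδ _) (by simpa [eq_comm] using hxd b j a j)
      (by simpa using hxd a i b i) (by simpa [hij.symm] using hxd b j b i) (hdd a j b i)
      (hxx a i b j)]
    split_ifs <;> simp
  simp only [mul_sum, ← sum_add_distrib, hterm, sum_ite_eq, mem_univ, if_true]

theorem HasFDerivAt.finsetProd_of_logDeriv {ι 𝕜 E 𝔸 : Type*} [NontriviallyNormedField 𝕜]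
    [NormedAddCommGroup E] [NormedSpace 𝕜 E] [NormedCommRing 𝔸] [NormedAlgebra 𝕜 𝔸]
    {u : Finset ι} {f : ι → E → 𝔸} {ℓ : ι → E →L[𝕜] 𝔸} {x : E}
    (h : ∀ i ∈ u, HasFDerivAt (f i) (f i x • ℓ i) x) :
    HasFDerivAt (∏ i ∈ u, f i ·) ((∏ i ∈ u, f i x) • ∑ i ∈ u, ℓ i) x := by
  classical
  convert HasFDerivAt.finsetProd h using 1
  rw [smul_sum]
  refine sum_congr rfl fun i hi => ?_
  rw [smul_smul, prod_erase_mul _ _ hi]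

noncomputable section PairDiff

variable {ι : Type*}

def coordSubCLM (i j : ι) : (ι → ℝ) →L[ℝ] ℂ :=
  Complex.ofRealCLM.comp (.proj (R := ℝ) (φ := fun _ : ι => ℝ) i - .proj j)

@[simp]
theorem coordSubCLM_apply (i j : ι) (v : ι → ℝ) : coordSubCLM i j v = ((v i - v j : ℝ) : ℂ) :=
  rfl

variable [Fintype ι]

theorem hasFDerivAt_ofReal_sub_cpow (c : ℂ) {i j : ι} {z : ι → ℝ} (h : z j < z i) :
    HasFDerivAt (fun z : ι → ℝ => ((z i - z j : ℝ) : ℂ) ^ c)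
      (((z i - z j : ℝ) : ℂ) ^ c • (c / ((z i - z j : ℝ) : ℂ)) • coordSubCLM i j) z := by
  have hw : ((z i - z j : ℝ) : ℂ) ≠ 0 := Complex.ofReal_ne_zero.2 (sub_pos.2 h).ne'
  refine ((Complex.hasStrictDerivAt_cpow_const (Complex.ofReal_mem_slitPlane.2 (sub_pos.2 h))
    ).hasDerivAt.comp_hasFDerivAt z (coordSubCLM i j).hasFDerivAt).congr_fderiv ?_
  rw [smul_smul, Complex.cpow_sub _ _ hw, Complex.cpow_one]
  ring_nf

variable [LinearOrder ι]

theorem sum_sum_filter_lt_ite_sub_ite {M : Type*} [AddCommGroup M] {F : ι → ι → M}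
    (hF : ∀ i j, F j i = -F i j) (k : ι) :
    ∑ i, ∑ j ∈ univ.filter (fun j => i < j),
      ((if i = k then F i j else 0) - if j = k then F i j else 0)
      = ∑ j ∈ univ.erase k, F k j := by
  have hlt : ∑ i, ∑ j ∈ univ.filter (fun j => i < j), (if j = k then F i j else 0)
      = ∑ j ∈ univ.filter (fun j => j < k), F j k := by
    simp only [sum_ite_eq', mem_filter, mem_univ, true_and, sum_ite, sum_const_zero, add_zero]
  have hsplit : univ.erase k = univ.filter (fun j => k < j) ∪ univ.filter (fun j => j < k) := by
    ext j
    simp only [mem_erase, mem_univ, and_true, mem_union, mem_filter, true_and]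
    rw [lt_or_lt_iff_ne, ne_comm]
  simp_rw [sum_sub_distrib]
  rw [hlt, hsplit, sum_union (disjoint_filter.2 fun j _ h h' => lt_asymm h h')]
  simp only [sum_ite_irrel, sum_const_zero, sum_ite_eq', mem_univ, if_true, hF k,
    sum_neg_distrib, sub_neg_eq_add]

def pairDiffPow (c : ι → ι → ℂ) (z : ι → ℝ) : ℂ :=
  ∏ i, ∏ j ∈ univ.filter (fun j => i < j), ((z i - z j : ℝ) : ℂ) ^ c i j

theorem pairDiffPow_ne_zero (c : ι → ι → ℂ) {z : ι → ℝ} (hz : ∀ i j, i < j → z j < z i) :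
    pairDiffPow c z ≠ 0 :=
  prod_ne_zero_iff.2 fun i _ => prod_ne_zero_iff.2 fun j hj =>
    Complex.cpow_ne_zero_iff.2 <| .inl <|
      Complex.ofReal_ne_zero.2 (sub_pos.2 (hz i j (mem_filter.1 hj).2)).ne'

def pairDiffLogDeriv (c : ι → ι → ℂ) (z : ι → ℝ) : (ι → ℝ) →L[ℝ] ℂ :=
  ∑ i, ∑ j ∈ univ.filter (fun j => i < j), (c i j / ((z i - z j : ℝ) : ℂ)) • coordSubCLM i j

theorem hasFDerivAt_pairDiffPow (c : ι → ι → ℂ) {z : ι → ℝ} (hz : ∀ i j, i < j → z j < z i) :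
    HasFDerivAt (pairDiffPow c) (pairDiffPow c z • pairDiffLogDeriv c z) z :=
  HasFDerivAt.finsetProd_of_logDeriv fun i _ => HasFDerivAt.finsetProd_of_logDeriv
    fun j hj => hasFDerivAt_ofReal_sub_cpow (c i j) (hz i j (mem_filter.1 hj).2)

theorem pairDiffLogDeriv_apply_single {c : ι → ι → ℂ} (hc : ∀ i j, c j i = c i j)
    (z : ι → ℝ) (k : ι) :
    pairDiffLogDeriv c z (Pi.single k 1) = ∑ j ∈ univ.erase k, c k j / ((z k - z j : ℝ) : ℂ) := by
  rw [← sum_sum_filter_lt_ite_sub_ite (F := fun i j => c i j / ((z i - z j : ℝ) : ℂ))]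
  · simp only [pairDiffLogDeriv, _root_.sum_apply, smul_apply, coordSubCLM_apply, Pi.single_apply]
    refine sum_congr rfl fun i _ => sum_congr rfl fun j _ => ?_
    split_ifs <;> simp
  · intro i j
    rw [hc, ← neg_sub, Complex.ofReal_neg, div_neg]

theorem fderiv_pairDiffPow_smul_apply_single {E : Type*} [NormedAddCommGroup E]
    [NormedSpace ℂ E] {c : ι → ι → ℂ} (hc : ∀ i j, c j i = c i j) {f : (ι → ℝ) → E}
    {z : ι → ℝ} (hz : ∀ i j, i < j → z j < z i) (hf : DifferentiableAt ℝ f z) (k : ι) :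
    fderiv ℝ (fun z => pairDiffPow c z • f z) z (Pi.single k 1)
      = pairDiffPow c z • (fderiv ℝ f z (Pi.single k 1)
          + (∑ j ∈ univ.erase k, c k j / ((z k - z j : ℝ) : ℂ)) • f z) := by
  rw [((hasFDerivAt_pairDiffPow c hz).fun_smul hf.hasFDerivAt).fderiv]
  simp only [add_apply, smul_apply, ContinuousLinearMap.smulRight_apply,
    pairDiffLogDeriv_apply_single hc, smul_eq_mul, smul_add, smul_smul]

end PairDiff

theorem theorem3_3_first_general (t r : ℕ)
    (E : Type*) [NormedAddCommGroup E] [NormedSpace ℂ E]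
    (x d : Fin t → Fin r → Module.End ℂ E)
    (hxx : ∀ a i b j, x a i * x b j + x b j * x a i = 0)
    (hdd : ∀ a i b j, d a i * d b j + d b j * d a i = 0)
    (hxd : ∀ a i b j, x a i * d b j + d b j * x a i =
      if a = b ∧ i = j then 1 else 0)
    (Ω : Fin r → Fin r → Module.End ℂ E)
    (hΩ : ∀ i j, Ω i j = ∑ a : Fin t, ∑ b : Fin t, x a i * d b i * x b j * d a j)
    (κ : Fin r → Fin r → Module.End ℂ E)
    (hκ : ∀ i j, κ i j = ∑ a : Fin t, ∑ b : Fin t,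
      (x a i * d a j * x b j * d b i + x b j * d b i * x a i * d a j))
    (H : Fin r → Module.End ℂ E)
    (hH : ∀ i, H i = ∑ a : Fin t, x a i * d a i)
    (ℏ : ℂ) (β : Fin r → ℂ)
    (U : Set (Fin r → ℝ)) (hU : U = {z | ∀ i j : Fin r, i < j → z j < z i})
    (f : (Fin r → ℝ) → E)
    (hfdiff : ∀ z ∈ U, DifferentiableAt ℝ f z)
    (hfwt : ∀ z ∈ U, ∀ i, H i (f z) = β i • f z)
    (g : (Fin r → ℝ) → E)
    (hg : ∀ z, g z =
      (∏ i : Fin r, ∏ j ∈ Finset.univ.filter (fun j => i < j),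
        ((z i - z j : ℝ) : ℂ) ^ (-(β i + β j) * ℏ / 2)) • f z) :
    (∀ z ∈ U, ∀ k : Fin r, fderiv ℝ f z (Pi.single k 1)
        = ℏ • ∑ j ∈ Finset.univ.erase k, ((z k - z j : ℝ) : ℂ)⁻¹ • Ω k j (f z))
    ↔ (∀ z ∈ U, ∀ k : Fin r, fderiv ℝ g z (Pi.single k 1)
        = (-(ℏ / 2)) • ∑ j ∈ Finset.univ.erase k,
            ((z k - z j : ℝ) : ℂ)⁻¹ • κ k j (g z)) := by
  set c : Fin r → Fin r → ℂ := fun i j => -(β i + β j) * ℏ / 2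
  have hκΩ : ∀ k j, k ≠ j → κ k j = H k + H j - 2 * Ω k j := fun k j hkj => by
    rw [eq_sub_iff_add_eq, hκ, hΩ, hH, hH]
    exact car_kappa_add_two_mul_omega hxx hdd hxd hkj
  obtain rfl : g = fun z => pairDiffPow c z • f z := funext hg
  subst hU
  refine forall₂_congr fun z hz => forall_congr' fun k => ?_
  have hrhs : (-(ℏ / 2)) • ∑ j ∈ univ.erase k,
        ((z k - z j : ℝ) : ℂ)⁻¹ • κ k j (pairDiffPow c z • f z)
      = pairDiffPow c z • (ℏ • ∑ j ∈ univ.erase k, ((z k - z j : ℝ) : ℂ)⁻¹ • Ω k j (f z)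
          + (∑ j ∈ univ.erase k, c k j / ((z k - z j : ℝ) : ℂ)) • f z) := by
    rw [smul_sum, smul_sum, sum_smul, ← sum_add_distrib, smul_sum]
    refine sum_congr rfl fun j hj => ?_
    rw [map_smul, hκΩ k j (ne_of_mem_erase hj).symm]
    simp only [LinearMap.sub_apply, LinearMap.add_apply, two_mul, hfwt z hz]
    module
  rw [fderiv_pairDiffPow_smul_apply_single (fun i j => by ring) hz (hfdiff z hz), hrhs,
    smul_right_inj (pairDiffPow_ne_zero c hz), add_left_inj]

/-- **Theorem 3.3, first part.**  Under the CAR setup, a differentiable function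
`f : U → E` lying in the `β`-weight space (`H_i f = β_i f`) satisfies the KZ system
`∂f/∂z_k = ℏ Σ_{j≠k} (z_k - z_j)⁻¹ Ω_{kj} f` iff
`g(z) = (Π_{i<j} (z_i - z_j)^{-(β_i+β_j)ℏ/2}) f(z)` satisfies
`∂g/∂z_k = -(ℏ/2) Σ_{j≠k} (z_k - z_j)⁻¹ κ_{kj} g`. -/
theorem theorem3_3_first (t r : ℕ) (ht : 0 < t) (hr : 0 < r)
    (E : Type*) [NormedAddCommGroup E] [NormedSpace ℂ E]
    (x d : Fin t → Fin r → Module.End ℂ E)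
    (hxx : ∀ a i b j, x a i * x b j + x b j * x a i = 0)
    (hdd : ∀ a i b j, d a i * d b j + d b j * d a i = 0)
    (hxd : ∀ a i b j, x a i * d b j + d b j * x a i =
      if a = b ∧ i = j then 1 else 0)
    (Ω : Fin r → Fin r → Module.End ℂ E)
    (hΩ : ∀ i j, Ω i j = ∑ a : Fin t, ∑ b : Fin t, x a i * d b i * x b j * d a j)
    (κ : Fin r → Fin r → Module.End ℂ E)
    (hκ : ∀ i j, κ i j = ∑ a : Fin t, ∑ b : Fin t,
      (x a i * d a j * x b j * d b i + x b j * d b i * x a i * d a j))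
    (H : Fin r → Module.End ℂ E)
    (hH : ∀ i, H i = ∑ a : Fin t, x a i * d a i)
    (ℏ : ℂ) (β : Fin r → ℂ)
    (U : Set (Fin r → ℝ)) (hU : U = {z | ∀ i j : Fin r, i < j → z j < z i})
    (f : (Fin r → ℝ) → E)
    (hfdiff : ∀ z ∈ U, DifferentiableAt ℝ f z)
    (hfwt : ∀ z ∈ U, ∀ i, H i (f z) = β i • f z)
    (g : (Fin r → ℝ) → E)
    (hg : ∀ z, g z =
      (∏ i : Fin r, ∏ j ∈ Finset.univ.filter (fun j => i < j),
        ((z i - z j : ℝ) : ℂ) ^ (-(β i + β j) * ℏ / 2)) • f z) :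
    (∀ z ∈ U, ∀ k : Fin r, fderiv ℝ f z (Pi.single k 1)
        = ℏ • ∑ j ∈ Finset.univ.erase k, ((z k - z j : ℝ) : ℂ)⁻¹ • Ω k j (f z))
    ↔ (∀ z ∈ U, ∀ k : Fin r, fderiv ℝ g z (Pi.single k 1)
        = (-(ℏ / 2)) • ∑ j ∈ Finset.univ.erase k,
            ((z k - z j : ℝ) : ℂ)⁻¹ • κ k j (g z)) :=
  theorem3_3_first_general t r E x d hxx hdd hxd Ω hΩ κ hκ H hH ℏ β U hU f hfdiff hfwt g hg
end

section
/- (Theorem 3.5, concrete form of the KZ–dynamical correspondence) Let f : U → E be a differentiable function such that H_i(f(z)) = β_i·f(z) for all z ∈ U and all 1 ≤ i ≤ r. Then f satisfies the Knizhnik–Zamolodchikov system ∂f/∂z_k = ℏ·Σ_{j ≠ k} (z_k − z_j)^{−1}·Ω_{kj}(f) for all k, if and only if the function u(z) := (Π_{1 ≤ i < j ≤ r} (z_i − z_j)^{−β_j·ℏ})·f(z) satisfies the dynamical system ∂u/∂z_k = −ℏ·Σ_{j ≠ k} (z_k − z_j)^{−1}·D̂_{kj}(u) for all k, where D̂_{kj}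 := D_{kj} if k < j and D̂_{kj} := D_{jk} if j < k. -/
/-!
On the `β`-weight space the CAR relations turn the KZ operators into the dynamical ones up to a
scalar: for `k ≠ j` one has `Ω_kj = H_j - F_jk F_kj = H_k - F_kj F_jk`, so
`Ω_kj f = β_max(k,j) f - D̂_kj f`. The scalar part `-ℏ Σ_{j≠k} β_max(k,j) / (z_k - z_j)` is exactly
the logarithmic derivative `∂_k log φ` of the prefactor `φ = ∏_{i<j} (z_i - z_j)^(-β_j ℏ)`, so the
gauge transformation `u = φ f` removes it, and since `φ` does not vanish on `U` the two systems are
equivalent.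
-/

open Finset

section CAR

variable {R α ι : Type*} [Ring R]

structure IsCAR_s3 [DecidableEq α] [DecidableEq ι] (x d : α → ι → R) : Prop where
  x_anticomm : ∀ a i b j, x a i * x b j + x b j * x a i = 0
  d_anticomm : ∀ a i b j, d a i * d b j + d b j * d a i = 0
  x_d_anticomm : ∀ a i b j, x a i * d b j + d b j * x a i = if a = b ∧ i = j then 1 else 0

variable [Fintype α]

def polarization (x d : α → ι → R) (i j : ι) : R := ∑ a, x a i * d a j

def casimir (x d : α → ι → R) (i j : ι) : R := ∑ a, ∑ b, x a i * d b i * x b j * d a j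

namespace IsCAR_s3

variable [DecidableEq α] [DecidableEq ι] {x d : α → ι → R}

theorem polarization_mul_polarization (h : IsCAR_s3 x d) (i j l : ι) :
    polarization x d i j * polarization x d j l =
      polarization x d i l - ∑ a, ∑ b, x a i * x b j * (d a j * d b l) := by
  have term : ∀ a b, x a i * d a j * (x b j * d b l)
      = (if a = b then x a i * d b l else 0) - x a i * x b j * (d a j * d b l) := by
    intro a b
    rw [mul_assoc, ← mul_assoc (d a j), eq_sub_of_add_eq' (h.x_d_anticomm b j a j)]
    split_ifs <;> simp_all [sub_mul, mul_sub, mul_assoc]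
  simp only [polarization, sum_mul_sum, term, sum_sub_distrib, sum_ite_eq, mem_univ, if_true]

theorem casimir_eq_sum (h : IsCAR_s3 x d) {i j : ι} (hij : i ≠ j) :
    casimir x d i j = ∑ a, ∑ b, x a i * x b j * (d a j * d b i) := by
  refine sum_congr rfl fun a _ => sum_congr rfl fun b _ => ?_
  rw [mul_assoc (x a i), eq_sub_of_add_eq' (h.x_d_anticomm b j b i), if_neg (by simp [hij.symm]),
    zero_sub]
  simp only [mul_neg, neg_mul, mul_assoc, eq_neg_of_add_eq_zero_left (h.d_anticomm b i a j),
    neg_neg]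

theorem casimir_comm (h : IsCAR_s3 x d) {i j : ι} (hij : i ≠ j) :
    casimir x d i j = casimir x d j i := by
  rw [h.casimir_eq_sum hij, h.casimir_eq_sum hij.symm, sum_comm]
  refine sum_congr rfl fun a _ => sum_congr rfl fun b _ => ?_
  rw [eq_neg_of_add_eq_zero_left (h.x_anticomm b i a j),
    eq_neg_of_add_eq_zero_left (h.d_anticomm b j a i), neg_mul, mul_neg, neg_neg]

theorem casimir_eq_sub (h : IsCAR_s3 x d) {i j : ι} (hij : i ≠ j) :
    casimir x d i j = polarization x d i i - polarization x d i j * polarization x d j i := by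
  rw [h.polarization_mul_polarization, sub_sub_cancel, h.casimir_eq_sum hij]

end IsCAR_s3

end CAR

section LogDeriv

variable {𝕜 E 𝔸 ι : Type*} [NontriviallyNormedField 𝕜] [NormedAddCommGroup E] [NormedSpace 𝕜 E]
  [NormedCommRing 𝔸] [NormedAlgebra 𝕜 𝔸] {x : E}

theorem HasFDerivAt.finsetProd_of_eq_smul [DecidableEq ι] {u : Finset ι} {g : ι → E → 𝔸}
    {ℓ : ι → E →L[𝕜] 𝔸} (hg : ∀ i ∈ u, HasFDerivAt (g i) (g i x • ℓ i) x) :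
    HasFDerivAt (∏ i ∈ u, g i ·) ((∏ i ∈ u, g i x) • ∑ i ∈ u, ℓ i) x := by
  refine (HasFDerivAt.finsetProd hg).congr_fderiv ?_
  rw [Finset.smul_sum]
  exact sum_congr rfl fun i hi => by rw [smul_smul, prod_erase_mul _ _ hi]

end LogDeriv

section ProdSubCpow

variable {E : Type*} [NormedAddCommGroup E] [NormedSpace ℝ E]

theorem HasFDerivAt.ofReal_cpow_const {f : E → ℝ} {f' : E →L[ℝ] ℝ} {x : E}
    (hf : HasFDerivAt f f' x) (hx : 0 < f x) (c : ℂ) :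
    HasFDerivAt (fun y => (f y : ℂ) ^ c) ((f x : ℂ) ^ c • f'.smulRight (c / f x)) x := by
  have hpow : HasDerivAt (fun s : ℝ => (s : ℂ) ^ c) (c * (f x : ℂ) ^ (c - 1)) (f x) :=
    (Complex.hasStrictDerivAt_cpow_const (Complex.ofReal_mem_slitPlane.2 hx)).hasDerivAt.comp_ofReal
  refine (hpow.hasFDerivAt.comp x hf).congr_fderiv ?_
  have hx0 : (f x : ℂ) ≠ 0 := Complex.ofReal_ne_zero.2 hx.ne'
  ext v
  simp only [Complex.cpow_sub _ _ hx0, Complex.cpow_one, ContinuousLinearMap.comp_apply,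
    ContinuousLinearMap.toSpanSingleton_apply, Complex.real_smul, smul_apply,
    ContinuousLinearMap.smulRight_apply, smul_eq_mul]
  field_simp

variable {ι : Type*} [Fintype ι] [LinearOrder ι]

noncomputable def prodSubCpow (e : ι → ι → ℂ) (y : ι → ℝ) : ℂ :=
  ∏ i, ∏ j ∈ univ.filter (fun j => i < j), ((y i - y j : ℝ) : ℂ) ^ e i j

theorem hasFDerivAt_prodSubCpow (e : ι → ι → ℂ) {z : ι → ℝ} (hz : StrictAnti z) :
    HasFDerivAt (prodSubCpow e) (prodSubCpow e z • ∑ i, ∑ j ∈ univ.filter (fun j => i < j),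
      (ContinuousLinearMap.proj (R := ℝ) (φ := fun _ : ι => ℝ) i -
        ContinuousLinearMap.proj j).smulRight (e i j / (z i - z j : ℝ))) z := by
  unfold prodSubCpow
  refine HasFDerivAt.finsetProd_of_eq_smul fun i _ =>
    HasFDerivAt.finsetProd_of_eq_smul fun j hj => ?_
  have hsub : HasFDerivAt (fun y : ι → ℝ => y i - y j)
      (ContinuousLinearMap.proj (R := ℝ) (φ := fun _ : ι => ℝ) i - ContinuousLinearMap.proj j) z :=
    (hasFDerivAt_apply i z).sub (hasFDerivAt_apply j z)
  exact hsub.ofReal_cpow_const (sub_pos.2 (hz (mem_filter.1 hj).2)) _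

theorem prodSubCpow_ne_zero (e : ι → ι → ℂ) {z : ι → ℝ} (hz : StrictAnti z) :
    prodSubCpow e z ≠ 0 :=
  prod_ne_zero_iff.2 fun i _ => prod_ne_zero_iff.2 fun j hj => by
    simp [Complex.cpow_eq_zero_iff, sub_eq_zero, (hz (mem_filter.1 hj).2).ne']

theorem sum_filter_lt_single_sub_mul {R : Type*} [CommRing R] (w : ι → ι → R) (k : ι) :
    ∑ i, ∑ j ∈ univ.filter (fun j => i < j),
        ((Pi.single k 1 : ι → R) i - (Pi.single k 1 : ι → R) j) * w i j
      = ∑ j, ((if k < j then w k j else 0) - if j < k then w j k else 0) := by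
  simp [Pi.single_apply, sub_mul, sum_sub_distrib, sum_filter]

theorem fderiv_prodSubCpow_apply_single (e : ι → ι → ℂ) {z : ι → ℝ} (hz : StrictAnti z) (k : ι) :
    fderiv ℝ (prodSubCpow e) z (Pi.single k 1) = prodSubCpow e z *
      ∑ j ∈ univ.erase k, (if k < j then e k j else e j k) * ((z k - z j : ℝ) : ℂ)⁻¹ := by
  have hsingle : ∀ i, ((Pi.single k 1 : ι → ℝ) i : ℂ) = (Pi.single k 1 : ι → ℂ) i := by
    intro i; by_cases h : i = k <;> simp [h]
  rw [(hasFDerivAt_prodSubCpow e hz).fderiv]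
  simp only [smul_apply, FunLike.coe_sum, Finset.sum_apply,
    ContinuousLinearMap.smulRight_apply, sub_apply, ContinuousLinearMap.proj_apply,
    Complex.real_smul, Complex.ofReal_sub, hsingle, smul_eq_mul, sum_filter_lt_single_sub_mul]
  congr 1
  rw [← sum_erase_add _ _ (mem_univ k), if_neg (lt_irrefl k), sub_zero, add_zero]
  refine sum_congr rfl fun j hj => ?_
  rcases lt_trichotomy k j with hkj | rfl | hjk
  · simp [hkj, hkj.not_gt, div_eq_mul_inv]
  · simp at hj
  · rw [if_neg hjk.not_gt, if_pos hjk, if_neg hjk.not_gt, zero_sub, ← div_neg, neg_sub,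
      div_eq_mul_inv]

end ProdSubCpow

section Gauge

variable {V E : Type*} [NormedAddCommGroup V] [NormedSpace ℝ V] [NormedAddCommGroup E]
  [NormedSpace ℂ E]

theorem fderiv_smul_apply_eq_iff {φ : V → ℂ} {f : V → E} {z : V} (hφ : DifferentiableAt ℝ φ z)
    (hφz : φ z ≠ 0) (hf : DifferentiableAt ℝ f z) (v : V) (A : E) :
    fderiv ℝ f z v = A ↔
      fderiv ℝ (fun y => φ y • f y) z v = φ z • A + fderiv ℝ φ z v • f z := by
  rw [fderiv_fun_smul hφ hf, add_apply, smul_apply,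
    ContinuousLinearMap.smulRight_apply, add_left_inj, (smul_right_injective E hφz).eq_iff]

end Gauge

theorem theorem3_5_general (t r : ℕ)
    (E : Type*) [NormedAddCommGroup E] [NormedSpace ℂ E]
    (x d : Fin t → Fin r → Module.End ℂ E)
    (hxx : ∀ a i b j, x a i * x b j + x b j * x a i = 0)
    (hdd : ∀ a i b j, d a i * d b j + d b j * d a i = 0)
    (hxd : ∀ a i b j, x a i * d b j + d b j * x a i =
      if a = b ∧ i = j then 1 else 0)
    (Ω : Fin r → Fin r → Module.End ℂ E)
    (hΩ : ∀ i j, Ω i j = ∑ a : Fin t, ∑ b : Fin t, x a i * d b i * x b j * d a j)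
    (H : Fin r → Module.End ℂ E)
    (hH : ∀ i, H i = ∑ a : Fin t, x a i * d a i)
    (F : Fin r → Fin r → Module.End ℂ E)
    (hF : ∀ i j, F i j = ∑ a : Fin t, x a i * d a j)
    (Dhat : Fin r → Fin r → Module.End ℂ E)
    (hDhat : ∀ k j, Dhat k j = if k < j then F j k * F k j else F k j * F j k)
    (ℏ : ℂ) (β : Fin r → ℂ)
    (U : Set (Fin r → ℝ)) (hU : U = {z | ∀ i j : Fin r, i < j → z j < z i})
    (f : (Fin r → ℝ) → E)
    (hfdiff : ∀ z ∈ U, DifferentiableAt ℝ f z)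
    (hfwt : ∀ z ∈ U, ∀ i, H i (f z) = β i • f z)
    (u : (Fin r → ℝ) → E)
    (hu : ∀ z, u z =
      (∏ i : Fin r, ∏ j ∈ Finset.univ.filter (fun j => i < j),
        ((z i - z j : ℝ) : ℂ) ^ (-(β j) * ℏ)) • f z) :
    (∀ z ∈ U, ∀ k : Fin r, fderiv ℝ f z (Pi.single k 1)
        = ℏ • ∑ j ∈ Finset.univ.erase k, ((z k - z j : ℝ) : ℂ)⁻¹ • Ω k j (f z))
    ↔ (∀ z ∈ U, ∀ k : Fin r, fderiv ℝ u z (Pi.single k 1)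
        = (-ℏ) • ∑ j ∈ Finset.univ.erase k,
            ((z k - z j : ℝ) : ℂ)⁻¹ • Dhat k j (u z)) := by
  have hcar : IsCAR_s3 x d := ⟨hxx, hdd, hxd⟩
  have hΩH : ∀ k j, j ≠ k → Ω k j = (if k < j then H j else H k) - Dhat k j := by
    intro k j hjk
    rw [show Ω k j = casimir x d k j from hΩ k j, hDhat, hH, hH, hF, hF]
    split_ifs
    · exact (hcar.casimir_comm hjk.symm).trans (hcar.casimir_eq_sub hjk)
    · exact hcar.casimir_eq_sub hjk.symm
  subst hU
  obtain rfl : u = fun y => prodSubCpow (fun i j => -(β j) * ℏ) y • f y := funext hu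
  refine forall₂_congr fun z hz => forall_congr' fun k => ?_
  rw [fderiv_smul_apply_eq_iff (hasFDerivAt_prodSubCpow _ hz).differentiableAt
    (prodSubCpow_ne_zero _ hz) (hfdiff z hz), fderiv_prodSubCpow_apply_single _ hz]
  refine Eq.congr_right ?_
  simp only [Finset.smul_sum, Finset.mul_sum, Finset.sum_smul, ← Finset.sum_add_distrib, map_smul]
  refine Finset.sum_congr rfl fun j hj => ?_
  rw [hΩH k j (Finset.ne_of_mem_erase hj), LinearMap.sub_apply]
  split_ifs with hkj
  · rw [hfwt z hz j]; module
  · rw [hfwt z hz k]; module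

/-- **Theorem 3.5 (concrete form of the KZ–dynamical correspondence).**
Under the CAR setup, a differentiable function `f : U → E` in the `β`-weight space
satisfies the KZ system `∂f/∂z_k = ℏ Σ_{j≠k} (z_k - z_j)⁻¹ Ω_{kj} f` iff
`u(z) = (Π_{i<j} (z_i - z_j)^{-β_j ℏ}) f(z)` satisfies the dynamical system
`∂u/∂z_k = -ℏ Σ_{j≠k} (z_k - z_j)⁻¹ D̂_{kj} u`, where `D̂_{kj} = D_{kj}` if `k < j`
and `D̂_{kj} = D_{jk}` otherwise, with `D_{ij} = F_{ji} ∘ F_{ij}` for `i < j`. -/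
theorem theorem3_5 (t r : ℕ) (ht : 0 < t) (hr : 0 < r)
    (E : Type*) [NormedAddCommGroup E] [NormedSpace ℂ E]
    (x d : Fin t → Fin r → Module.End ℂ E)
    (hxx : ∀ a i b j, x a i * x b j + x b j * x a i = 0)
    (hdd : ∀ a i b j, d a i * d b j + d b j * d a i = 0)
    (hxd : ∀ a i b j, x a i * d b j + d b j * x a i =
      if a = b ∧ i = j then 1 else 0)
    (Ω : Fin r → Fin r → Module.End ℂ E)
    (hΩ : ∀ i j, Ω i j = ∑ a : Fin t, ∑ b : Fin t, x a i * d b i * x b j * d a j)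
    (H : Fin r → Module.End ℂ E)
    (hH : ∀ i, H i = ∑ a : Fin t, x a i * d a i)
    (F : Fin r → Fin r → Module.End ℂ E)
    (hF : ∀ i j, F i j = ∑ a : Fin t, x a i * d a j)
    (Dhat : Fin r → Fin r → Module.End ℂ E)
    (hDhat : ∀ k j, Dhat k j = if k < j then F j k * F k j else F k j * F j k)
    (ℏ : ℂ) (β : Fin r → ℂ)
    (U : Set (Fin r → ℝ)) (hU : U = {z | ∀ i j : Fin r, i < j → z j < z i})
    (f : (Fin r → ℝ) → E)
    (hfdiff : ∀ z ∈ U, DifferentiableAt ℝ f z)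
    (hfwt : ∀ z ∈ U, ∀ i, H i (f z) = β i • f z)
    (u : (Fin r → ℝ) → E)
    (hu : ∀ z, u z =
      (∏ i : Fin r, ∏ j ∈ Finset.univ.filter (fun j => i < j),
        ((z i - z j : ℝ) : ℂ) ^ (-(β j) * ℏ)) • f z) :
    (∀ z ∈ U, ∀ k : Fin r, fderiv ℝ f z (Pi.single k 1)
        = ℏ • ∑ j ∈ Finset.univ.erase k, ((z k - z j : ℝ) : ℂ)⁻¹ • Ω k j (f z))
    ↔ (∀ z ∈ U, ∀ k : Fin r, fderiv ℝ u z (Pi.single k 1)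
        = (-ℏ) • ∑ j ∈ Finset.univ.erase k,
            ((z k - z j : ℝ) : ℂ)⁻¹ • Dhat k j (u z)) :=
  theorem3_5_general t r E x d hxx hdd hxd Ω hΩ H hH F hF Dhat hDhat ℏ β U hU f hfdiff hfwt u hu
end

section
/- (Identity (5.5)–(5.9): expression of the orthogonal Casimir through the dual so_{2n}-generators) For all 1 ≤ a ≠ b ≤ n, one has the equality of linear endomorphisms of E: Ω_{a,b} = −(1/2)·(M_{a,b}∘M_{b,a} + M_{−a,b}∘M_{b,−a}) + (t/4)·id − (1/2)·M_{b,b}. -/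
/-!
For `a ≠ b` the halved commutators defining `M_{a,b}`, `M_{-a,b}`, `M_{b,-a}` are plain sums
`Σ_k x_{k,a} ∂_{k,b}`, ..., while `M_{b,b} = Σ_k x_{k,b} ∂_{k,b} - t/2`. Expanding
`M_{a,b} M_{b,a} + M_{-a,b} M_{b,-a}` as a double sum over `(k, l)`, each diagonal term equals
`1 - x_{k,b} ∂_{k,b}`, because the even operator `x_{k,b} ∂_{k,b}` commutes with `x_{k,a}` and
`∂_{k,a}`. For `k < l` the `(k, l)` and `(l, k)` terms together are minus the `(k, l)` summand of
`2 Ω_{a,b}`: the four generators in each monomial pairwise anticommute, so every monomial is a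
signed reordering of another.
-/

open Finset

section Anticommuting

variable {R : Type*} [Ring R] {p q r s : R}

theorem mul_left_comm_of_anticommute (h : q * p = -(p * q)) (r : R) :
    q * (p * r) = -(p * (q * r)) := by
  rw [← mul_assoc, h, neg_mul, mul_assoc]

theorem commute_mul_of_anticommute (hq : q * p = -(p * q)) (hr : r * p = -(p * r)) :
    Commute p (q * r) := by
  rw [Commute, SemiconjBy, mul_assoc, hr, mul_neg, mul_left_comm_of_anticommute hq, neg_neg]

theorem mul_mul_mul_eq_neg_mul_reverse (hqr : r * q = -(q * r)) (hqs : s * q = -(q * s))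
    (hrs : s * r = -(r * s)) : p * q * (r * s) = -(p * s * (r * q)) := by
  simp only [mul_assoc, hqr, hrs, mul_left_comm_of_anticommute hqs, mul_neg, neg_neg]

theorem mul_mul_mul_eq_of_anticommute (hpq : q * p = -(p * q)) (hpr : r * p = -(p * r))
    (hps : s * p = -(p * s)) (hrs : s * r = -(r * s)) :
    p * q * (r * s) = q * s * (r * p) := by
  simp only [mul_assoc, hpr, hrs, mul_left_comm_of_anticommute hpq,
    mul_left_comm_of_anticommute hps, mul_neg, neg_neg]

end Anticommuting

theorem Finset.sum_sum_eq_sum_diag_add_sum_lt {ι M : Type*} [Fintype ι] [LinearOrder ι]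
    [AddCommMonoid M] (f : ι → ι → M) :
    ∑ i, ∑ j, f i j = ∑ i, f i i + ∑ i, ∑ j with i < j, (f i j + f j i) := by
  have hrow (i : ι) : ∑ j, f i j = f i i + (∑ j with i < j, f i j + ∑ j with j < i, f i j) := by
    rw [Fintype.sum_eq_add_sum_compl i, ← sum_filter_add_sum_filter_not _ (i < ·)]
    congr 2 <;> refine sum_congr (ext fun j => ?_) fun _ _ => rfl <;>
      simp only [mem_filter, mem_compl, mem_singleton, mem_univ, true_and, not_lt]
    · exact and_iff_right_of_imp fun h => h.ne'
    · rw [lt_iff_le_and_ne, and_comm]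
  have hlower : ∑ i, ∑ j with j < i, f i j = ∑ i, ∑ j with i < j, f j i :=
    sum_comm' (by simp)
  simp only [hrow, sum_add_distrib, hlower]

theorem inv_two_smul_sub_neg {𝕜 M : Type*} [Field 𝕜] [NeZero (2 : 𝕜)] [AddCommGroup M]
    [Module 𝕜 M] (y : M) : (2 : 𝕜)⁻¹ • (y - -y) = y := by
  rw [sub_neg_eq_add, ← two_smul 𝕜, smul_smul, inv_mul_cancel₀ two_ne_zero, one_smul]

structure IsCAR_s4 {κ α R : Type*} [DecidableEq κ] [DecidableEq α] [Ring R]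
    (x d : κ → α → R) : Prop where
  anticomm_x : ∀ k a l b, x k a * x l b + x l b * x k a = 0
  anticomm_d : ∀ k a l b, d k a * d l b + d l b * d k a = 0
  anticomm_x_d : ∀ k a l b, x k a * d l b + d l b * x k a = if k = l ∧ a = b then 1 else 0

namespace IsCAR_s4

variable {κ α R : Type*} [DecidableEq κ] [DecidableEq α] [Ring R] {x d : κ → α → R}
  (h : IsCAR_s4 x d) {k l : κ} {a b : α}
include h

theorem x_mul_x_s4 (k a l b) : x l b * x k a = -(x k a * x l b) :=
  eq_neg_of_add_eq_zero_right (h.anticomm_x k a l b)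

theorem d_mul_d_s4 (k a l b) : d l b * d k a = -(d k a * d l b) :=
  eq_neg_of_add_eq_zero_right (h.anticomm_d k a l b)

theorem d_mul_x_of_ne (hne : k ≠ l ∨ a ≠ b) : d l b * x k a = -(x k a * d l b) :=
  eq_neg_of_add_eq_zero_right ((h.anticomm_x_d k a l b).trans (if_neg (by tauto)))

theorem x_mul_d_of_ne (hne : k ≠ l ∨ a ≠ b) : x k a * d l b = -(d l b * x k a) :=
  eq_neg_of_add_eq_zero_left ((h.anticomm_x_d k a l b).trans (if_neg (by tauto)))

theorem d_mul_x_self (k a) : d k a * x k a = 1 - x k a * d k a :=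
  eq_sub_of_add_eq' ((h.anticomm_x_d k a k a).trans (if_pos ⟨rfl, rfl⟩))

theorem generator_products_diag (hab : a ≠ b) :
    x k a * d k b * (x k b * d k a) + d k a * d k b * (x k b * x k a) = 1 - x k b * d k b := by
  have hxN : Commute (x k a) (x k b * d k b) :=
    commute_mul_of_anticommute (h.x_mul_x_s4 k a k b) (h.d_mul_x_of_ne (.inr hab))
  have hdN : Commute (d k a) (x k b * d k b) :=
    commute_mul_of_anticommute (h.x_mul_d_of_ne (.inr hab.symm)) (h.d_mul_d_s4 k a k b)
  calc x k a * d k b * (x k b * d k a) + d k a * d k b * (x k b * x k a)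
      = x k a * (d k b * x k b) * d k a + d k a * (d k b * x k b) * x k a := by
        simp only [mul_assoc]
    _ = (x k a * d k a + d k a * x k a)
          - (x k a * (x k b * d k b) * d k a + d k a * (x k b * d k b) * x k a) := by
        rw [h.d_mul_x_self]; noncomm_ring
    _ = (x k a * d k a + d k a * x k a) - x k b * d k b * (x k a * d k a + d k a * x k a) := by
        rw [hxN.eq, hdN.eq, mul_add, mul_assoc _ (x k a), mul_assoc _ (d k a)]
    _ = 1 - x k b * d k b := by rw [h.anticomm_x_d, if_pos ⟨rfl, rfl⟩, mul_one]

theorem x_mul_d_mul_x_mul_d_swap_d (hkl : k ≠ l) (hab : a ≠ b) :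
    x k a * d l a * (x l b * d k b) = -(x k a * d k b * (x l b * d l a)) :=
  mul_mul_mul_eq_neg_mul_reverse (h.x_mul_d_of_ne (.inr hab.symm)) (h.d_mul_d_s4 l a k b)
    (h.d_mul_x_of_ne (.inl hkl.symm))

theorem x_mul_d_mul_x_mul_d_eq_d_mul_d_mul_x_mul_x (hkl : k ≠ l) :
    x k a * d l a * (x k b * d l b) = d l a * d l b * (x k b * x k a) :=
  mul_mul_mul_eq_of_anticommute (h.d_mul_x_of_ne (.inl hkl)) (h.x_mul_x_s4 k a k b)
    (h.d_mul_x_of_ne (.inl hkl)) (h.d_mul_x_of_ne (.inl hkl))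

theorem casimir_term_eq (hkl : k ≠ l) (hab : a ≠ b) :
    (x k a * d l a - x l a * d k a) * (x l b * d k b - x k b * d l b)
      = -((x k a * d k b * (x l b * d l a) + d k a * d k b * (x l b * x l a))
        + (x l a * d l b * (x k b * d k a) + d l a * d l b * (x k b * x k a))) := by
  rw [mul_sub, sub_mul, sub_mul,
    h.x_mul_d_mul_x_mul_d_swap_d hkl hab, h.x_mul_d_mul_x_mul_d_swap_d hkl.symm hab,
    h.x_mul_d_mul_x_mul_d_eq_d_mul_d_mul_x_mul_x hkl,
    h.x_mul_d_mul_x_mul_d_eq_d_mul_d_mul_x_mul_x hkl.symm]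
  abel

theorem generator_products_eq [Fintype κ] [LinearOrder κ] (hab : a ≠ b) :
    (∑ k, x k a * d k b) * (∑ k, x k b * d k a) + (∑ k, d k a * d k b) * (∑ k, x k b * x k a)
      = ∑ k, (1 - x k b * d k b) - ∑ k, ∑ l with k < l,
        (x k a * d l a - x l a * d k a) * (x l b * d k b - x k b * d l b) := by
  simp only [sum_mul_sum, ← sum_add_distrib]
  rw [sum_sum_eq_sum_diag_add_sum_lt, sub_eq_add_neg, ← sum_neg_distrib]
  congr 1
  · exact sum_congr rfl fun k _ => h.generator_products_diag hab
  · refine sum_congr rfl fun k _ => ?_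
    rw [← sum_neg_distrib]
    refine sum_congr rfl fun l hl => ?_
    rw [h.casimir_term_eq (mem_filter.1 hl).2.ne hab, neg_neg]

variable {𝕜 : Type*} [Field 𝕜] [NeZero (2 : 𝕜)] [Module 𝕜 R]

theorem inv_two_smul_x_mul_d_sub_of_ne (hab : a ≠ b) :
    (2 : 𝕜)⁻¹ • (x k a * d k b - d k b * x k a) = x k a * d k b := by
  rw [h.d_mul_x_of_ne (.inr hab), inv_two_smul_sub_neg]

theorem inv_two_smul_x_mul_d_sub_self :
    (2 : 𝕜)⁻¹ • (x k a * d k a - d k a * x k a) = x k a * d k a - (2 : 𝕜)⁻¹ • 1 := by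
  rw [h.d_mul_x_self, sub_sub_eq_add_sub, ← sub_neg_eq_add, smul_sub, inv_two_smul_sub_neg]

theorem inv_two_smul_d_mul_d_sub :
    (2 : 𝕜)⁻¹ • (d k a * d k b - d k b * d k a) = d k a * d k b := by
  rw [h.d_mul_d_s4 k a k b, inv_two_smul_sub_neg]

theorem inv_two_smul_x_mul_x_sub :
    (2 : 𝕜)⁻¹ • (x k a * x k b - x k b * x k a) = x k a * x k b := by
  rw [h.x_mul_x_s4 k a k b, inv_two_smul_sub_neg]

end IsCAR_s4

theorem identity5_5_to_5_9_general (t n : ℕ)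
    (E : Type*) [AddCommGroup E] [Module ℂ E]
    (x d : Fin t → Fin n → Module.End ℂ E)
    (hxx : ∀ k a l b, x k a * x l b + x l b * x k a = 0)
    (hdd : ∀ k a l b, d k a * d l b + d l b * d k a = 0)
    (hxd : ∀ k a l b, x k a * d l b + d l b * x k a =
      if k = l ∧ a = b then 1 else 0)
    (MP : Fin n → Fin n → Module.End ℂ E)
    (hMP : ∀ a b, MP a b = ∑ k : Fin t, ((2 : ℂ)⁻¹) • (x k a * d k b - d k b * x k a))
    (MN : Fin n → Fin n → Module.End ℂ E)
    (hMN : ∀ a b, MN a b = ∑ k : Fin t, ((2 : ℂ)⁻¹) • (d k a * d k b - d k b * d k a))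
    (MB : Fin n → Fin n → Module.End ℂ E)
    (hMB : ∀ b a, MB b a = ∑ k : Fin t, ((2 : ℂ)⁻¹) • (x k b * x k a - x k a * x k b))
    (Ω : Fin n → Fin n → Module.End ℂ E)
    (hΩ : ∀ a b, Ω a b = ((2 : ℂ)⁻¹) •
      ∑ k : Fin t, ∑ l ∈ Finset.univ.filter (fun l => k < l),
        (x k a * d l a - x l a * d k a) * (x l b * d k b - x k b * d l b)) :
    ∀ a b : Fin n, a ≠ b →
      Ω a b = (-(2 : ℂ)⁻¹) • (MP a b * MP b a + MN a b * MB b a)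
        + ((t : ℂ) / 4) • (1 : Module.End ℂ E) - ((2 : ℂ)⁻¹) • MP b b := by
  intro a b hab
  have hCAR : IsCAR_s4 x d := ⟨hxx, hdd, hxd⟩
  simp only [hMP, hMN, hMB, hCAR.inv_two_smul_x_mul_d_sub_of_ne hab,
    hCAR.inv_two_smul_x_mul_d_sub_of_ne hab.symm, hCAR.inv_two_smul_x_mul_d_sub_self,
    hCAR.inv_two_smul_d_mul_d_sub, hCAR.inv_two_smul_x_mul_x_sub]
  rw [hCAR.generator_products_eq hab, hΩ, sum_sub_distrib, sum_sub_distrib, sum_const, sum_const,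
    card_univ, Fintype.card_fin]
  module

/-- **Identity (5.5)–(5.9).**  Under the CAR setup on `E` (exterior algebra on basis
`v_{k,a}`, `1 ≤ k ≤ t`, `1 ≤ a ≤ n`), with the dual `so_{2n}`-generators
`M_{a,b} = Σ_k (x_{k,a} ∂_{k,b} - ∂_{k,b} x_{k,a})/2`,
`M_{-a,b} = Σ_k (∂_{k,a} ∂_{k,b} - ∂_{k,b} ∂_{k,a})/2`,
`M_{b,-a} = Σ_k (x_{k,b} x_{k,a} - x_{k,a} x_{k,b})/2`,
and the orthogonal Casimir
`Ω_{a,b} = (1/2) Σ_{k<l} (x_{k,a} ∂_{l,a} - x_{l,a} ∂_{k,a})(x_{l,b} ∂_{k,b} - x_{k,b} ∂_{l,b})`,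
one has `Ω_{a,b} = -(1/2)(M_{a,b} M_{b,a} + M_{-a,b} M_{b,-a}) + (t/4)·id - (1/2) M_{b,b}`
for all `a ≠ b`. -/
theorem identity5_5_to_5_9 (t n : ℕ) (ht : 0 < t) (hn : 0 < n)
    (E : Type*) [AddCommGroup E] [Module ℂ E]
    (x d : Fin t → Fin n → Module.End ℂ E)
    (hxx : ∀ k a l b, x k a * x l b + x l b * x k a = 0)
    (hdd : ∀ k a l b, d k a * d l b + d l b * d k a = 0)
    (hxd : ∀ k a l b, x k a * d l b + d l b * x k a =
      if k = l ∧ a = b then 1 else 0)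
    (MP : Fin n → Fin n → Module.End ℂ E)
    (hMP : ∀ a b, MP a b = ∑ k : Fin t, ((2 : ℂ)⁻¹) • (x k a * d k b - d k b * x k a))
    (MN : Fin n → Fin n → Module.End ℂ E)
    (hMN : ∀ a b, MN a b = ∑ k : Fin t, ((2 : ℂ)⁻¹) • (d k a * d k b - d k b * d k a))
    (MB : Fin n → Fin n → Module.End ℂ E)
    (hMB : ∀ b a, MB b a = ∑ k : Fin t, ((2 : ℂ)⁻¹) • (x k b * x k a - x k a * x k b))
    (Ω : Fin n → Fin n → Module.End ℂ E)
    (hΩ : ∀ a b, Ω a b = ((2 : ℂ)⁻¹) •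
      ∑ k : Fin t, ∑ l ∈ Finset.univ.filter (fun l => k < l),
        (x k a * d l a - x l a * d k a) * (x l b * d k b - x k b * d l b)) :
    ∀ a b : Fin n, a ≠ b →
      Ω a b = (-(2 : ℂ)⁻¹) • (MP a b * MP b a + MN a b * MB b a)
        + ((t : ℂ) / 4) • (1 : Module.End ℂ E) - ((2 : ℂ)⁻¹) • MP b b :=
  identity5_5_to_5_9_general t n E x d hxx hdd hxd MP hMP MN hMN MB hMB Ω hΩ
end

section
/- (Flatness of the dual connection (5.14)) For 1 ≤ a ≠ b ≤ n set K̂_{a,b} := K_{min(a,b),max(a,b)}. Then for every z ∈ ℂ^n with pairwise distinct coordinates and every pair a ≠ b, the endomorphisms A_a(z) := Σ_{c ≠ a} (z_a − z_c)^{−1}·K̂_{a,c} of E satisfy the commutation relation A_a(z)∘A_b(z) = A_b(z)∘A_a(z); equivalently, for every ℏ ∈ ℂ the connection d + ℏ·Σ_{a<b} dlog(z_a − z_b)·K_{a,b} on the trivial bundle with fiber E is flat. -/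
/-!
Write `f^a_{kl} = x_{ka}∂_{la} - x_{la}∂_{ka}` for the generators of `𝔰𝔬(t)` acting on the `a`-th
factor of `E = ⋀(ℂᵗ)^{⊗n}`, `Ω_{ab} = ∑_{k,l} f^a_{kl} f^b_{kl}` and `N_a = ∑_k x_{ka}∂_{ka}`.
Reordering fermions with the CAR gives `K_{a,b} = ¼ Ω_{ab} + ½ (t - N_a)` for `a ≠ b`, so `K̂` is the
`𝔰𝔬(t)` Gaudin tensor shifted by operators commuting with every `f`. That tensor satisfies the
infinitesimal braid relations: generators at different sites commute, and `Ω_{ab}` commutes with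
the diagonal `f^a + f^b` because `K_{a,b}` is a polynomial in the `𝔰𝔬(t)`-invariant pairings
`∑_k x_{ka}∂_{kb}`, `∑_k ∂_{ka}∂_{kb}`, `∑_k x_{kb}x_{ka}`. For any such family the commutator
`[A_a, A_b]` collapses to a sum over `c ≠ a, b` of multiples of `[Ω_{ab}, Ω_{ac}]`, whose
coefficients vanish by Arnold's relation.
-/

open Finset

attribute [local instance] LieRing.ofAssociativeRing

section RingLemmas

variable {R : Type*} [Ring R]

theorem commute_mul_of_anticomm {a b c : R} (hb : a * b + b * a = 0) (hc : a * c + c * a = 0) :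
    Commute a (b * c) := by
  have hb' : a * b = -(b * a) := eq_neg_of_add_eq_zero_left hb
  have hc' : a * c = -(c * a) := eq_neg_of_add_eq_zero_left hc
  calc a * (b * c) = -(b * (a * c)) := by rw [← mul_assoc, hb', neg_mul, mul_assoc]
    _ = b * c * a := by rw [hc', mul_neg, neg_neg, mul_assoc]

theorem mul_lie_eq_anticomm (a b c : R) :
    ⁅a * b, c⁆ = a * (b * c + c * b) - (a * c + c * a) * b := by
  rw [Ring.lie_def]
  noncomm_ring

theorem lie_mul_eq_add (a b c : R) : ⁅a, b * c⁆ = ⁅a, b⁆ * c + b * ⁅a, c⁆ := by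
  simp only [Ring.lie_def]
  noncomm_ring

theorem half_smul_sub_eq_of_anticomm {𝕜 : Type*} [Field 𝕜] [CharZero 𝕜] [Algebra 𝕜 R]
    {p q : R} (h : p * q + q * p = 0) : (2 : 𝕜)⁻¹ • (p * q - q * p) = p * q := by
  rw [eq_neg_of_add_eq_zero_right h, sub_neg_eq_add, ← two_smul 𝕜, smul_smul,
    inv_mul_cancel₀ two_ne_zero, one_smul]

end RingLemmas

section VectorFamily

variable {R τ : Type*} [Ring R] [DecidableEq τ]

def IsVectorFamily (F : τ → τ → R) (v : τ → R) : Prop :=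
  ∀ m n k, ⁅F m n, v k⁆ = (if n = k then v m else 0) - (if m = k then v n else 0)

theorem IsVectorFamily.commute_dotProduct [Fintype τ] {F : τ → τ → R} {v w : τ → R}
    (hv : IsVectorFamily F v) (hw : IsVectorFamily F w) (m n : τ) :
    Commute (F m n) (v ⬝ᵥ w) := by
  rw [commute_iff_lie_eq, dotProduct, lie_sum]
  simp only [lie_mul_eq_add, hv m n, hw m n, sub_mul, mul_sub, ite_mul, mul_ite, zero_mul, mul_zero,
    sum_add_distrib, sum_sub_distrib, sum_ite_eq, mem_univ, if_true]
  abel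

end VectorFamily

section InfinitesimalBraid

variable {ι R : Type*} [Ring R]

structure IsInfinitesimalBraid (Ω : ι → ι → R) : Prop where
  symm : ∀ a b, Ω a b = Ω b a
  commute_of_disjoint : ∀ a b c e, a ≠ b → c ≠ e → a ≠ c → a ≠ e → b ≠ c → b ≠ e →
    Commute (Ω a b) (Ω c e)
  commute_add : ∀ a b c, a ≠ b → a ≠ c → b ≠ c → Commute (Ω a b) (Ω a c + Ω b c)

variable {Ω : ι → ι → R}

theorem IsInfinitesimalBraid.congr {Ω' : ι → ι → R} (hΩ : IsInfinitesimalBraid Ω)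
    (h : ∀ a b, a ≠ b → Ω a b = Ω' a b) : IsInfinitesimalBraid Ω' where
  symm a b := by
    rcases eq_or_ne a b with rfl | hab
    · rfl
    · rw [← h a b hab, ← h b a hab.symm, hΩ.symm]
  commute_of_disjoint a b c e hab hce hac hae hbc hbe := by
    rw [← h a b hab, ← h c e hce]
    exact hΩ.commute_of_disjoint a b c e hab hce hac hae hbc hbe
  commute_add a b c hab hac hbc := by
    rw [← h a b hab, ← h a c hac, ← h b c hbc]
    exact hΩ.commute_add a b c hab hac hbc

theorem IsInfinitesimalBraid.smul_add_of_commute {𝕜 : Type*} [CommSemiring 𝕜] [Algebra 𝕜 R]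
    (hΩ : IsInfinitesimalBraid Ω) (r : 𝕜) {S : ι → ι → R} (hS : ∀ a b, S a b = S b a)
    (hSΩ : ∀ a b c e, Commute (S a b) (Ω c e)) (hSS : ∀ a b c e, Commute (S a b) (S c e)) :
    IsInfinitesimalBraid fun a b => r • Ω a b + S a b where
  symm a b := by rw [hΩ.symm, hS]
  commute_of_disjoint a b c e hab hce hac hae hbc hbe :=
    (((hΩ.commute_of_disjoint a b c e hab hce hac hae hbc hbe).smul_left r).smul_right r
      |>.add_right ((hSΩ c e a b).symm.smul_left r)).add_left
      (((hSΩ a b c e).smul_right r).add_right (hSS a b c e))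
  commute_add a b c hab hac hbc := by
    rw [add_add_add_comm, ← smul_add]
    exact ((((hΩ.commute_add a b c hab hac hbc).smul_left r).smul_right r).add_right
      (((hSΩ a c a b).symm.add_right (hSΩ b c a b).symm).smul_left r)).add_left
      ((((hSΩ a b a c).add_right (hSΩ a b b c)).smul_right r).add_right
        ((hSS a b a c).add_right (hSS a b b c)))

theorem arnold_relation {𝕜 : Type*} [Field 𝕜] {u v w : 𝕜} (huv : u ≠ v) (hvw : v ≠ w)
    (hwu : w ≠ u) :
    (u - v)⁻¹ * (v - w)⁻¹ + (v - w)⁻¹ * (w - u)⁻¹ + (w - u)⁻¹ * (u - v)⁻¹ = 0 := by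
  have := sub_ne_zero.2 huv
  have := sub_ne_zero.2 hvw
  have := sub_ne_zero.2 hwu
  field_simp
  ring

theorem IsInfinitesimalBraid.lie_bc_eq_neg_lie_ac (hΩ : IsInfinitesimalBraid Ω) {a b c : ι}
    (hab : a ≠ b) (hac : a ≠ c) (hbc : b ≠ c) : ⁅Ω a b, Ω b c⁆ = -⁅Ω a b, Ω a c⁆ := by
  rw [eq_neg_iff_add_eq_zero, ← lie_add, add_comm]
  exact (hΩ.commute_add a b c hab hac hbc).lie_eq

theorem IsInfinitesimalBraid.lie_ac_bc_eq_lie_ab_ac (hΩ : IsInfinitesimalBraid Ω) {a b c : ι}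
    (hab : a ≠ b) (hac : a ≠ c) (hbc : b ≠ c) : ⁅Ω a c, Ω b c⁆ = ⁅Ω a b, Ω a c⁆ := by
  rw [hΩ.symm b c, ← lie_skew (Ω a b), eq_neg_iff_add_eq_zero, add_comm, ← lie_add]
  exact (hΩ.commute_add a c b hac hab hbc.symm).lie_eq

theorem IsInfinitesimalBraid.commute_sum {𝕜 : Type*} [Field 𝕜] [Fintype ι] [DecidableEq ι]
    [Algebra 𝕜 R] (hΩ : IsInfinitesimalBraid Ω) {z : ι → 𝕜} (hz : Function.Injective z)
    {a b : ι} (hab : a ≠ b) :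
    Commute (∑ c ∈ univ.erase a, (z a - z c)⁻¹ • Ω a c)
      (∑ e ∈ univ.erase b, (z b - z e)⁻¹ • Ω b e) := by
  set g : ι → ι → R := fun c e => ((z b - z e)⁻¹ * (z a - z c)⁻¹) • ⁅Ω a c, Ω b e⁆
  set S := (univ.erase a).erase b
  have hS : ∀ c ∈ S, c ≠ a ∧ c ≠ b := fun c hc => by
    simp only [S, mem_erase] at hc
    exact ⟨hc.2.1, hc.1⟩
  have h_diag : ∀ c ∈ S, ∑ e ∈ S, g c e = g c c := fun c hc =>
    sum_eq_single_of_mem c hc fun e he hec => by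
      obtain ⟨hca, hcb⟩ := hS c hc
      obtain ⟨hea, heb⟩ := hS e he
      simp only [g, (hΩ.commute_of_disjoint a c b e hca.symm heb.symm hab hea.symm hcb
        hec.symm).lie_eq, smul_zero]
  have h_ba : g b a = 0 := by simp only [g, hΩ.symm b a, lie_self, smul_zero]
  have h_triangle : ∀ c ∈ S, g b c + (g c a + g c c) = 0 := fun c hc => by
    obtain ⟨hca, hcb⟩ := hS c hc
    calc g b c + (g c a + g c c)
        = -((z a - z b)⁻¹ * (z b - z c)⁻¹ + (z b - z c)⁻¹ * (z c - z a)⁻¹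
            + (z c - z a)⁻¹ * (z a - z b)⁻¹) • ⁅Ω a b, Ω a c⁆ := by
          simp only [g, hΩ.lie_bc_eq_neg_lie_ac hab hca.symm hcb.symm, hΩ.symm b a,
            ← lie_skew (Ω a c) (Ω a b), hΩ.lie_ac_bc_eq_lie_ab_ac hab hca.symm hcb.symm]
          rw [← neg_sub (z a) (z b), ← neg_sub (z c) (z a)]
          simp only [inv_neg]
          module
      _ = 0 := by
          rw [arnold_relation (hz.ne hab) (hz.ne hcb.symm) (hz.ne hca), neg_zero, zero_smul]
  have h_split : ∀ f : ι → R, ∑ e ∈ univ.erase b, f e = f a + ∑ e ∈ S, f e := fun f => by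
    rw [show S = (univ.erase b).erase a from erase_right_comm,
      add_sum_erase _ _ (mem_erase.2 ⟨hab, mem_univ a⟩)]
  rw [commute_iff_lie_eq, sum_lie_sum]
  -- the explicit arguments make `lie_smul` match the bracket of `LieRing.ofAssociativeRing`
  simp only [smul_lie, lie_smul (R := 𝕜) (L := R) (M := R), smul_smul]
  change ∑ c ∈ univ.erase a, ∑ e ∈ univ.erase b, g c e = 0
  rw [← add_sum_erase _ _ (mem_erase.2 ⟨hab.symm, mem_univ b⟩)]
  simp only [h_split, h_ba, zero_add]
  rw [add_comm, ← sum_add_distrib]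
  exact sum_eq_zero fun c hc => by rw [h_diag c hc, add_comm]; exact h_triangle c hc

end InfinitesimalBraid

section CAR

variable {R τ ι : Type*} [Ring R] [DecidableEq τ] [DecidableEq ι]

structure IsCAR_s7 (x d : τ → ι → R) : Prop where
  x_anticomm : ∀ k a l b, x k a * x l b + x l b * x k a = 0
  d_anticomm : ∀ k a l b, d k a * d l b + d l b * d k a = 0
  x_d_anticomm : ∀ k a l b, x k a * d l b + d l b * x k a = if k = l ∧ a = b then 1 else 0

def soGen (x d : τ → ι → R) (a : ι) (k l : τ) : R :=
  x k a * d l a - x l a * d k a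

namespace IsCAR_s7

variable {x d : τ → ι → R} (hx : IsCAR_s7 x d)
include hx

theorem lie_x_mul_d_x (m n k : τ) (c b : ι) :
    ⁅x m c * d n c, x k b⁆ = if n = k ∧ c = b then x m c else 0 := by
  rw [mul_lie_eq_anticomm, add_comm (d n c * x k b), hx.x_d_anticomm, hx.x_anticomm]
  simp only [eq_comm (a := k), eq_comm (a := b), mul_ite, mul_one, mul_zero, zero_mul, sub_zero]

theorem lie_x_mul_d_d (m n k : τ) (c b : ι) :
    ⁅x m c * d n c, d k b⁆ = -(if m = k ∧ c = b then d n c else 0) := by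
  rw [mul_lie_eq_anticomm, hx.d_anticomm, hx.x_d_anticomm]
  simp only [ite_mul, one_mul, zero_mul, mul_zero, zero_sub]

theorem commute_x_mul_d_of_ne {c b : ι} (h : c ≠ b) (m n k l : τ) :
    Commute (x m c * d n c) (x k b * d l b) :=
  (commute_iff_lie_eq.2 (by rw [hx.lie_x_mul_d_x, if_neg fun h' => h h'.2])).mul_right
    (commute_iff_lie_eq.2 (by rw [hx.lie_x_mul_d_d, if_neg fun h' => h h'.2, neg_zero]))

theorem lie_soGen_x (c b : ι) (m n k : τ) : ⁅soGen x d c m n, x k b⁆ =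
    if c = b then (if n = k then x m b else 0) - (if m = k then x n b else 0) else 0 := by
  rw [soGen, sub_lie, hx.lie_x_mul_d_x, hx.lie_x_mul_d_x]
  by_cases h : c = b <;> simp [h]

theorem lie_soGen_d (c b : ι) (m n k : τ) : ⁅soGen x d c m n, d k b⁆ =
    if c = b then (if n = k then d m b else 0) - (if m = k then d n b else 0) else 0 := by
  rw [soGen, sub_lie, hx.lie_x_mul_d_d, hx.lie_x_mul_d_d]
  by_cases h : c = b
  · simp only [h, and_true, ↓reduceIte, sub_neg_eq_add]
    abel
  · simp only [h, and_false, ↓reduceIte, neg_zero, sub_self]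

theorem isVectorFamily_x {s : Finset ι} {b : ι} (hb : b ∈ s) :
    IsVectorFamily (fun m n => ∑ c ∈ s, soGen x d c m n) (x · b) := fun m n k => by
  rw [sum_lie, sum_congr rfl fun c _ => hx.lie_soGen_x c b m n k, sum_ite_eq', if_pos hb]

theorem isVectorFamily_d {s : Finset ι} {b : ι} (hb : b ∈ s) :
    IsVectorFamily (fun m n => ∑ c ∈ s, soGen x d c m n) (d · b) := fun m n k => by
  rw [sum_lie, sum_congr rfl fun c _ => hx.lie_soGen_d c b m n k, sum_ite_eq', if_pos hb]

theorem commute_soGen_of_ne {a b : ι} (h : a ≠ b) (k l m n : τ) :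
    Commute (soGen x d a k l) (soGen x d b m n) :=
  ((hx.commute_x_mul_d_of_ne h k l m n).sub_left (hx.commute_x_mul_d_of_ne h l k m n)).sub_right
    ((hx.commute_x_mul_d_of_ne h k l n m).sub_left (hx.commute_x_mul_d_of_ne h l k n m))

theorem term_add_swap_eq {a b : ι} (hab : a ≠ b) (k l : τ) :
    (x k b * d k a * (x l a * d l b) + d k a * d k b * (x l b * x l a)) +
      (x l b * d l a * (x k a * d k b) + d l a * d l b * (x k b * x k a)) =
    (if k = l then 2 * (1 - x k a * d k a) else 0) + soGen x d a k l * soGen x d b k l := by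
  have h_reorder : ∀ k l, x k b * d k a * (x l a * d l b) + d k a * d k b * (x l b * x l a) =
      d k a * x l a * (x k b * d l b + d k b * x l b) := fun k l => by
    have h₁ : Commute (x k b) (d k a * x l a) := commute_mul_of_anticomm
      (by rw [hx.x_d_anticomm, if_neg fun h => hab h.2.symm]) (hx.x_anticomm k b l a)
    have h₂ : Commute (x l a) (d k b * x l b) := commute_mul_of_anticomm
      (by rw [hx.x_d_anticomm, if_neg fun h => hab h.2]) (hx.x_anticomm l a l b)
    calc x k b * d k a * (x l a * d l b) + d k a * d k b * (x l b * x l a)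
        = x k b * (d k a * x l a) * d l b + d k a * (d k b * x l b * x l a) := by noncomm_ring
      _ = d k a * x l a * x k b * d l b + d k a * (x l a * (d k b * x l b)) := by
          rw [h₁.eq, ← h₂.eq]
      _ = d k a * x l a * (x k b * d l b + d k b * x l b) := by noncomm_ring
  have h_car : ∀ k l c, d k c * x l c = (if k = l then 1 else 0) - x l c * d k c := fun k l c => by
    rw [eq_sub_iff_add_eq, add_comm, hx.x_d_anticomm]
    simp only [and_true]
    exact if_congr eq_comm rfl rfl
  rw [h_reorder, h_reorder]
  simp only [h_car, soGen]
  rcases eq_or_ne k l with rfl | hkl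
  · simp only [if_true]
    noncomm_ring
  · simp only [if_neg hkl, if_neg hkl.symm]
    noncomm_ring

end IsCAR_s7

variable [Fintype τ]

def soCasimir (x d : τ → ι → R) (a b : ι) : R :=
  ∑ k, ∑ l, soGen x d a k l * soGen x d b k l

def occupation (x d : τ → ι → R) (a : ι) : R :=
  (x · a) ⬝ᵥ (d · a)

namespace IsCAR_s7

variable {x d : τ → ι → R} (hx : IsCAR_s7 x d)
include hx

theorem commute_soGen_occupation (c a : ι) (m n : τ) :
    Commute (soGen x d c m n) (occupation x d a) := by
  rcases eq_or_ne c a with rfl | h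
  · simpa [occupation] using (hx.isVectorFamily_x (mem_singleton_self c)).commute_dotProduct
      (hx.isVectorFamily_d (mem_singleton_self c)) m n
  · exact Commute.sum_right _ _ _ fun k _ =>
      (hx.commute_x_mul_d_of_ne h m n k k).sub_left (hx.commute_x_mul_d_of_ne h n m k k)

theorem commute_occupation (a b : ι) : Commute (occupation x d a) (occupation x d b) := by
  rcases eq_or_ne a b with rfl | h
  · exact Commute.refl _
  · exact Commute.sum_left _ _ _ fun k _ => Commute.sum_right _ _ _ fun l _ =>
      hx.commute_x_mul_d_of_ne h k k l l

theorem soCasimir_comm (a b : ι) : soCasimir x d a b = soCasimir x d b a := by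
  rcases eq_or_ne a b with rfl | h
  · rfl
  · exact sum_congr rfl fun k _ => sum_congr rfl fun l _ => (hx.commute_soGen_of_ne h k l k l).eq

theorem commute_soCasimir_occupation (a b e : ι) :
    Commute (soCasimir x d a b) (occupation x d e) :=
  Commute.sum_left _ _ _ fun k _ => Commute.sum_left _ _ _ fun l _ =>
    (hx.commute_soGen_occupation a e k l).mul_left (hx.commute_soGen_occupation b e k l)

theorem two_mul_mul_add_mul_eq {a b : ι} (hab : a ≠ b) :
    2 * ((x · b) ⬝ᵥ (d · a) * (x · a) ⬝ᵥ (d · b) + (d · a) ⬝ᵥ (d · b) * (x · b) ⬝ᵥ (x · a)) =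
      2 * ((Fintype.card τ : R) - occupation x d a) + soCasimir x d a b := by
  set T : τ → τ → R := fun k l =>
    x k b * d k a * (x l a * d l b) + d k a * d k b * (x l b * x l a)
  have h_expand : (x · b) ⬝ᵥ (d · a) * (x · a) ⬝ᵥ (d · b) + (d · a) ⬝ᵥ (d · b) * (x · b) ⬝ᵥ (x · a)
      = ∑ k, ∑ l, T k l := by
    simp only [dotProduct, sum_mul_sum, ← sum_add_distrib, T]
  calc 2 * ((x · b) ⬝ᵥ (d · a) * (x · a) ⬝ᵥ (d · b) + (d · a) ⬝ᵥ (d · b) * (x · b) ⬝ᵥ (x · a))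
      = ∑ k, ∑ l, (T k l + T l k) := by
        rw [h_expand, two_mul]
        nth_rw 2 [sum_comm]
        simp only [← sum_add_distrib]
    _ = ∑ k, ∑ l, ((if k = l then 2 * (1 - x k a * d k a) else 0)
          + soGen x d a k l * soGen x d b k l) := by
        simp only [T, hx.term_add_swap_eq hab]
    _ = 2 * ((Fintype.card τ : R) - occupation x d a) + soCasimir x d a b := by
        simp only [sum_add_distrib, sum_ite_eq, mem_univ, if_true, ← mul_sum, sum_sub_distrib,
          sum_const, card_univ, nsmul_one, occupation, dotProduct, soCasimir]

theorem commute_soCasimir_soGen {a b c : ι} (hac : a ≠ c) (hbc : b ≠ c) (m n : τ) :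
    Commute (soCasimir x d a b) (soGen x d c m n) :=
  Commute.sum_left _ _ _ fun k _ => Commute.sum_left _ _ _ fun l _ =>
    (hx.commute_soGen_of_ne hac k l m n).mul_left (hx.commute_soGen_of_ne hbc k l m n)

theorem commute_sum_soGen_soCasimir {a b : ι} (hab : a ≠ b) (m n : τ) :
    Commute (∑ c ∈ {a, b}, soGen x d c m n) (soCasimir x d a b) := by
  have hxa := hx.isVectorFamily_x (mem_insert_self a {b})
  have hda := hx.isVectorFamily_d (mem_insert_self a {b})
  have hb : b ∈ ({a, b} : Finset ι) := mem_insert_of_mem (mem_singleton_self b)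
  have hxb := hx.isVectorFamily_x hb
  have hdb := hx.isVectorFamily_d hb
  rw [eq_sub_of_add_eq' (hx.two_mul_mul_add_mul_eq hab).symm]
  exact ((Commute.ofNat_right _ 2).mul_right
    (((hxb.commute_dotProduct hda m n).mul_right (hxa.commute_dotProduct hdb m n)).add_right
      ((hda.commute_dotProduct hdb m n).mul_right (hxb.commute_dotProduct hxa m n)))).sub_right
    ((Commute.ofNat_right _ 2).mul_right
      ((Nat.cast_commute _ _).symm.sub_right (hxa.commute_dotProduct hda m n)))

theorem isInfinitesimalBraid_soCasimir : IsInfinitesimalBraid (soCasimir x d) where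
  symm := hx.soCasimir_comm
  commute_of_disjoint _ _ _ _ _ _ hac hae hbc hbe :=
    Commute.sum_right _ _ _ fun m _ => Commute.sum_right _ _ _ fun n _ =>
      (hx.commute_soCasimir_soGen hac hbc m n).mul_right (hx.commute_soCasimir_soGen hae hbe m n)
  commute_add a b c hab hac hbc := by
    have h_split : soCasimir x d a c + soCasimir x d b c =
        ∑ m, ∑ n, (∑ e ∈ {a, b}, soGen x d e m n) * soGen x d c m n := by
      simp only [soCasimir, sum_pair hab, add_mul, sum_add_distrib]
    rw [h_split]
    exact Commute.sum_right _ _ _ fun m _ => Commute.sum_right _ _ _ fun n _ =>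
      (hx.commute_sum_soGen_soCasimir hab m n).symm.mul_right
        (hx.commute_soCasimir_soGen hac hbc m n)

variable {𝕜 : Type*} [Field 𝕜] [Algebra 𝕜 R]

theorem isInfinitesimalBraid_soCasimir_add_occupation (σ : ι → ι → ι) (hσ : ∀ a b, σ a b = σ b a) :
    IsInfinitesimalBraid fun a b => (4 : 𝕜)⁻¹ • soCasimir x d a b
      + (2 : 𝕜)⁻¹ • ((Fintype.card τ : R) - occupation x d (σ a b)) :=
  hx.isInfinitesimalBraid_soCasimir.smul_add_of_commute _ (fun a b => by rw [hσ])
    (fun a b c e => ((Nat.cast_commute _ _).sub_left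
      (hx.commute_soCasimir_occupation c e (σ a b)).symm).smul_left _)
    (fun a b c e => (((Nat.cast_commute _ _).sub_left ((Nat.cast_commute _ _).symm.sub_right
      (hx.commute_occupation _ _))).smul_left _).smul_right _)

variable [CharZero 𝕜]

theorem sum_half_smul_x_d {a b : ι} (hab : a ≠ b) :
    ∑ k, (2 : 𝕜)⁻¹ • (x k a * d k b - d k b * x k a) = (x · a) ⬝ᵥ (d · b) :=
  sum_congr rfl fun k _ =>
    half_smul_sub_eq_of_anticomm (by rw [hx.x_d_anticomm, if_neg fun h => hab h.2])

theorem sum_half_smul_d_d (a b : ι) :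
    ∑ k, (2 : 𝕜)⁻¹ • (d k a * d k b - d k b * d k a) = (d · a) ⬝ᵥ (d · b) :=
  sum_congr rfl fun k _ => half_smul_sub_eq_of_anticomm (hx.d_anticomm k a k b)

theorem sum_half_smul_x_x (a b : ι) :
    ∑ k, (2 : 𝕜)⁻¹ • (x k a * x k b - x k b * x k a) = (x · a) ⬝ᵥ (x · b) :=
  sum_congr rfl fun k _ => half_smul_sub_eq_of_anticomm (hx.x_anticomm k a k b)

theorem half_smul_mul_add_mul_eq {a b : ι} (hab : a ≠ b) :
    (2 : 𝕜)⁻¹ • ((x · b) ⬝ᵥ (d · a) * (x · a) ⬝ᵥ (d · b) + (d · a) ⬝ᵥ (d · b) * (x · b) ⬝ᵥ (x · a))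
      = (4 : 𝕜)⁻¹ • soCasimir x d a b + (2 : 𝕜)⁻¹ • ((Fintype.card τ : R) - occupation x d a) := by
  set L := (x · b) ⬝ᵥ (d · a) * (x · a) ⬝ᵥ (d · b) + (d · a) ⬝ᵥ (d · b) * (x · b) ⬝ᵥ (x · a)
  have h := hx.two_mul_mul_add_mul_eq hab
  rw [two_mul, two_mul] at h
  calc (2 : 𝕜)⁻¹ • L = (2 : 𝕜)⁻¹ • (2 : 𝕜)⁻¹ • (L + L) := by
        rw [← two_smul 𝕜, smul_smul (2 : 𝕜)⁻¹ 2, inv_mul_cancel₀ two_ne_zero, one_smul]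
    _ = _ := by
        rw [h]
        module

end IsCAR_s7

end CAR

theorem flatness_dual_connection_general (t n : ℕ)
    (E : Type*) [AddCommGroup E] [Module ℂ E]
    (x d : Fin t → Fin n → Module.End ℂ E)
    (hxx : ∀ k a l b, x k a * x l b + x l b * x k a = 0)
    (hdd : ∀ k a l b, d k a * d l b + d l b * d k a = 0)
    (hxd : ∀ k a l b, x k a * d l b + d l b * x k a =
      if k = l ∧ a = b then 1 else 0)
    (MP : Fin n → Fin n → Module.End ℂ E)
    (hMP : ∀ a b, MP a b = ∑ k : Fin t, ((2 : ℂ)⁻¹) • (x k a * d k b - d k b * x k a))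
    (MN : Fin n → Fin n → Module.End ℂ E)
    (hMN : ∀ a b, MN a b = ∑ k : Fin t, ((2 : ℂ)⁻¹) • (d k a * d k b - d k b * d k a))
    (MB : Fin n → Fin n → Module.End ℂ E)
    (hMB : ∀ b a, MB b a = ∑ k : Fin t, ((2 : ℂ)⁻¹) • (x k b * x k a - x k a * x k b))
    (K : Fin n → Fin n → Module.End ℂ E)
    (hK : ∀ a b, K a b = ((2 : ℂ)⁻¹) • (MP b a * MP a b + MN a b * MB b a))
    (Khat : Fin n → Fin n → Module.End ℂ E)
    (hKhat : ∀ a b, Khat a b = K (min a b) (max a b))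
    (z : Fin n → ℂ) (hz : ∀ a b : Fin n, a ≠ b → z a ≠ z b)
    (A : Fin n → Module.End ℂ E)
    (hA : ∀ a, A a = ∑ c ∈ Finset.univ.erase a, (z a - z c)⁻¹ • Khat a c) :
    ∀ a b : Fin n, a ≠ b → A a * A b = A b * A a := by
  intro a b hab
  have hx : IsCAR_s7 x d := ⟨hxx, hdd, hxd⟩
  have hKhat_eq : ∀ a b, a ≠ b → (4 : ℂ)⁻¹ • soCasimir x d a b
      + (2 : ℂ)⁻¹ • ((Fintype.card (Fin t) : Module.End ℂ E) - occupation x d (min a b))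
      = Khat a b := by
    intro a b hab
    have hne : min a b ≠ max a b := (min_lt_max.2 hab).ne
    have h_min_max : soCasimir x d (min a b) (max a b) = soCasimir x d a b := by
      rcases le_total a b with h | h
      · rw [min_eq_left h, max_eq_right h]
      · rw [min_eq_right h, max_eq_left h, hx.soCasimir_comm]
    rw [hKhat, hK, hMP, hMP, hMN, hMB, hx.sum_half_smul_x_d hne.symm, hx.sum_half_smul_x_d hne,
      hx.sum_half_smul_d_d, hx.sum_half_smul_x_x, hx.half_smul_mul_add_mul_eq hne, h_min_max]
  have h_braid : IsInfinitesimalBraid Khat :=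
    (hx.isInfinitesimalBraid_soCasimir_add_occupation (𝕜 := ℂ) min min_comm).congr hKhat_eq
  rw [hA, hA]
  exact (h_braid.commute_sum (fun a b h => by_contra fun h' => hz a b h' h) hab).eq

/-- **Flatness of the dual connection (5.14).**  Under the orthogonal CAR setup,
with `K_{a,b} = (1/2)(M_{b,a} M_{a,b} + M_{-a,b} M_{b,-a})` and
`K̂_{a,b} = K_{min(a,b),max(a,b)}`, for every `z ∈ ℂ^n` with pairwise distinct
coordinates the endomorphisms `A_a(z) = Σ_{c≠a} (z_a - z_c)⁻¹ K̂_{a,c}` pairwise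
commute; i.e., the connection `d + ℏ Σ_{a<b} dlog(z_a - z_b) K_{a,b}` is flat. -/
theorem flatness_dual_connection (t n : ℕ) (ht : 0 < t) (hn : 0 < n)
    (E : Type*) [AddCommGroup E] [Module ℂ E]
    (x d : Fin t → Fin n → Module.End ℂ E)
    (hxx : ∀ k a l b, x k a * x l b + x l b * x k a = 0)
    (hdd : ∀ k a l b, d k a * d l b + d l b * d k a = 0)
    (hxd : ∀ k a l b, x k a * d l b + d l b * x k a =
      if k = l ∧ a = b then 1 else 0)
    (MP : Fin n → Fin n → Module.End ℂ E)
    (hMP : ∀ a b, MP a b = ∑ k : Fin t, ((2 : ℂ)⁻¹) • (x k a * d k b - d k b * x k a))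
    (MN : Fin n → Fin n → Module.End ℂ E)
    (hMN : ∀ a b, MN a b = ∑ k : Fin t, ((2 : ℂ)⁻¹) • (d k a * d k b - d k b * d k a))
    (MB : Fin n → Fin n → Module.End ℂ E)
    (hMB : ∀ b a, MB b a = ∑ k : Fin t, ((2 : ℂ)⁻¹) • (x k b * x k a - x k a * x k b))
    (K : Fin n → Fin n → Module.End ℂ E)
    (hK : ∀ a b, K a b = ((2 : ℂ)⁻¹) • (MP b a * MP a b + MN a b * MB b a))
    (Khat : Fin n → Fin n → Module.End ℂ E)
    (hKhat : ∀ a b, Khat a b = K (min a b) (max a b))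
    (z : Fin n → ℂ) (hz : ∀ a b : Fin n, a ≠ b → z a ≠ z b)
    (A : Fin n → Module.End ℂ E)
    (hA : ∀ a, A a = ∑ c ∈ Finset.univ.erase a, (z a - z c)⁻¹ • Khat a c) :
    ∀ a b : Fin n, a ≠ b → A a * A b = A b * A a :=
  flatness_dual_connection_general t n E x d hxx hdd hxd MP hMP MN hMN MB hMB K hK Khat hKhat z hz A
    hA
end
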